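/- Suppose ε = min_{m,m′} P(m,m′) > 0 and let D > 0, L₁ = 4M((1−ε)/ε)² / min{μ_min, 1 − μ_max}, and L₂ = 4M(1−ε)²/ε³ + √M, where μ_max, μ_min are the maximum and minimum entries of μ. Let (μ_k, P_k) be another pair with P_k ∈ ℝ^{M×M} row-stochastic and all entries of μ_k in (0,1); let H_k and p_k denote the belief update and reward probability defined with (μ_k, P_k) in place of (μ, P). Let v : B → ℝ satisfy sup_{b∈B} |v(b)| ≤ D/2 and |v(b) − v(b′)| ≤ (D/2)·‖b − b′‖₁ for all b, b′ ∈ B. Then for every belief b ∈ B and arm i ∈ {1,…,I}, | Σ_{r∈{0,1}} v(H_k(b,i,r))·p_k(r|b,i) − Σ_{r∈{0,1}} v(H(b,i,r))·p(r|b,i) | ≤ D·‖(μ_k)_i − μ_i‖₁ + (D/2)·[ L₁·‖μ_k − μ‖₁ + L₂·‖P_k − P‖_F ], where (μ_k)_i and μ_i denote the i-th columns, ‖μ_k − μ‖₁ = max_j Σ_m |μ_k(m,j) − μ(m,j)|, and ‖·‖_F is the Frobenius norm. -/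
import Mathlib


open Finset

/-- Membership in the belief simplex `B`. -/
def IsBelief {M : ℕ} (b : Fin M → ℝ) : Prop :=
  (∀ m, 0 ≤ b m) ∧ ∑ m, b m = 1

/-- ℓ¹ distance between two vectors. -/
noncomputable def l1 {M : ℕ} (b b' : Fin M → ℝ) : ℝ :=
  ∑ m, |b m - b' m|

/-- A row-stochastic matrix. -/
def RowStochastic {M : ℕ} (P : Fin M → Fin M → ℝ) : Prop :=
  (∀ m m', 0 ≤ P m m') ∧ ∀ m, ∑ m', P m m' = 1

/-- Bernoulli likelihood `p^r (1-p)^(1-r)` for `r ∈ {0,1}` (encoded as `Bool`). -/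
noncomputable def bern (p : ℝ) (r : Bool) : ℝ :=
  if r then p else 1 - p

/-- Bayesian belief update `H(b, i, r)`. -/
noncomputable def Hupd {M I : ℕ} (P : Fin M → Fin M → ℝ) (μ : Fin M → Fin I → ℝ)
    (b : Fin M → ℝ) (i : Fin I) (r : Bool) : Fin M → ℝ :=
  fun m => (∑ m', P m' m * (bern (μ m' i) r * b m')) /
    (∑ m'', bern (μ m'' i) r * b m'')

/-- Probability `p(r | b, i)` of observing reward `r` under belief `b` pulling arm `i`. -/
noncomputable def pObs {M I : ℕ} (μ : Fin M → Fin I → ℝ)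
    (b : Fin M → ℝ) (i : Fin I) (r : Bool) : ℝ :=
  ∑ m, bern (μ m i) r * b m

/-- `n`-step iterated Bayesian belief update `H^(n)(b, i_{1:n}, r_{1:n})`. -/
noncomputable def Hiter {M I : ℕ} (P : Fin M → Fin M → ℝ) (μ : Fin M → Fin I → ℝ) :
    (n : ℕ) → (Fin M → ℝ) → (Fin n → Fin I) → (Fin n → Bool) → (Fin M → ℝ)
  | 0, b, _, _ => b
  | n + 1, b, is, rs =>
      Hiter P μ n (Hupd P μ b (is 0) (rs 0)) (fun t => is t.succ) (fun t => rs t.succ)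

/-- Law `L(r_{1:n+1} | m, i_{1:n+1})` of a reward sequence of length `n+1`
given the initial hidden state `m`. -/
noncomputable def law {M I : ℕ} (P : Fin M → Fin M → ℝ) (μ : Fin M → Fin I → ℝ) :
    (n : ℕ) → Fin M → (Fin (n + 1) → Fin I) → (Fin (n + 1) → Bool) → ℝ
  | 0, m, is, rs => bern (μ m (is 0)) (rs 0)
  | n + 1, m, is, rs =>
      bern (μ m (is 0)) (rs 0) *
        ∑ m', P m m' * law P μ n m' (fun t => is t.succ) (fun t => rs t.succ)

/-- Law `Q^(n+1)(r_{1:n+1} | b, i_{1:n+1})` of a reward sequence of length `n+1`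
given the initial belief `b`. -/
noncomputable def Qlaw {M I : ℕ} (P : Fin M → Fin M → ℝ) (μ : Fin M → Fin I → ℝ)
    (n : ℕ) (b : Fin M → ℝ) (is : Fin (n + 1) → Fin I) (rs : Fin (n + 1) → Bool) : ℝ :=
  ∑ m, b m * law P μ n m is rs



section Aux
variable {M I : ℕ}

lemma bern_pos {p : ℝ} (hp : p ∈ Set.Ioo (0:ℝ) 1) (r : Bool) : 0 < bern p r := by
  cases r <;> simp [bern] <;> [linarith [hp.2]; exact hp.1]

lemma bern_le_one {p : ℝ} (hp : p ∈ Set.Ioo (0:ℝ) 1) (r : Bool) : bern p r ≤ 1 := by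
  cases r <;> simp [bern] <;> [linarith [hp.1]; linarith [hp.2]]

lemma abs_bern_sub (p q : ℝ) (r : Bool) : |bern p r - bern q r| = |p - q| := by
  cases r
  · simp only [bern, Bool.false_eq_true, if_false]
    rw [show (1-p)-(1-q) = -(p-q) by ring, abs_neg]
  · simp [bern]

lemma belief_exists_pos {b : Fin M → ℝ} (hb : IsBelief b) : ∃ m, 0 < b m := by
  by_contra h
  push_neg at h
  have : ∑ m, b m = 0 := Finset.sum_eq_zero (fun m _ => le_antisymm (h m) (hb.1 m))
  rw [hb.2] at this; norm_num at this

lemma belief_le_one {b : Fin M → ℝ} (hb : IsBelief b) (m : Fin M) : b m ≤ 1 := by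
  rw [← hb.2]
  exact Finset.single_le_sum (fun m' _ => hb.1 m') (mem_univ m)

lemma pObs_pos {μ : Fin M → Fin I → ℝ} (hμ : ∀ m i, μ m i ∈ Set.Ioo (0:ℝ) 1)
    {b : Fin M → ℝ} (hb : IsBelief b) (i : Fin I) (r : Bool) : 0 < pObs μ b i r := by
  obtain ⟨m₀, hm₀⟩ := belief_exists_pos hb
  have h1 : 0 < bern (μ m₀ i) r * b m₀ := mul_pos (bern_pos (hμ m₀ i) r) hm₀
  have h2 : ∀ m ∈ univ, 0 ≤ bern (μ m i) r * b m :=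
    fun m _ => mul_nonneg (bern_pos (hμ m i) r).le (hb.1 m)
  exact h1.trans_le (Finset.single_le_sum h2 (mem_univ m₀))

lemma Hupd_isBelief {P : Fin M → Fin M → ℝ} (hP : RowStochastic P)
    {μ : Fin M → Fin I → ℝ} (hμ : ∀ m i, μ m i ∈ Set.Ioo (0:ℝ) 1)
    {b : Fin M → ℝ} (hb : IsBelief b) (i : Fin I) (r : Bool) :
    IsBelief (Hupd P μ b i r) := by
  have hS : 0 < pObs μ b i r := pObs_pos hμ hb i r
  have hS' : (∑ m'', bern (μ m'' i) r * b m'') = pObs μ b i r := rfl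
  constructor
  · intro m
    apply div_nonneg _ (by rw [hS']; exact hS.le)
    exact Finset.sum_nonneg fun m' _ => mul_nonneg (hP.1 m' m)
      (mul_nonneg (bern_pos (hμ m' i) r).le (hb.1 m'))
  · unfold Hupd
    rw [← Finset.sum_div, Finset.sum_comm]
    have : ∀ m' : Fin M, ∑ m, P m' m * (bern (μ m' i) r * b m')
        = bern (μ m' i) r * b m' := by
      intro m'
      rw [← Finset.sum_mul, hP.2 m', one_mul]
    rw [Finset.sum_congr rfl (fun m' _ => this m'), hS']
    exact div_self hS.ne'

lemma pObs_diff_le {μ μk : Fin M → Fin I → ℝ} {b : Fin M → ℝ} (hb : IsBelief b)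
    (i : Fin I) (r : Bool) :
    |pObs μk b i r - pObs μ b i r| ≤ ∑ m, |μk m i - μ m i| := by
  unfold pObs
  rw [← Finset.sum_sub_distrib]
  refine (Finset.abs_sum_le_sum_abs _ _).trans (Finset.sum_le_sum fun m _ => ?_)
  rw [show bern (μk m i) r * b m - bern (μ m i) r * b m
      = (bern (μk m i) r - bern (μ m i) r) * b m by ring, abs_mul,
    abs_bern_sub, abs_of_nonneg (hb.1 m)]
  nlinarith [abs_nonneg (μk m i - μ m i), belief_le_one hb m, hb.1 m]

end Aux

lemma keyB {M I : ℕ} {P Pk : Fin M → Fin M → ℝ} (hP : RowStochastic P) (hPk : RowStochastic Pk)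
    {μ μk : Fin M → Fin I → ℝ} (hμ : ∀ m i, μ m i ∈ Set.Ioo (0:ℝ) 1)
    (hμk : ∀ m i, μk m i ∈ Set.Ioo (0:ℝ) 1)
    {b : Fin M → ℝ} (hb : IsBelief b) (i : Fin I) (r : Bool) :
    pObs μ b i r * l1 (Hupd Pk μk b i r) (Hupd P μ b i r) ≤
      (∑ m, ∑ m', |Pk m m' - P m m'|) + 2 * ∑ m, |μk m i - μ m i| := by
  set S := pObs μ b i r with hSdef
  set Sk := pObs μk b i r with hSkdef
  have hS : 0 < S := pObs_pos hμ hb i r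
  have hSk : 0 < Sk := pObs_pos hμk hb i r
  set N : Fin M → ℝ := fun m => ∑ m', P m' m * (bern (μ m' i) r * b m') with hN
  set Nk : Fin M → ℝ := fun m => ∑ m', Pk m' m * (bern (μk m' i) r * b m') with hNk
  have hHk : ∀ m, Hupd Pk μk b i r m = Nk m / Sk := fun m => rfl
  have hH : ∀ m, Hupd P μ b i r m = N m / S := fun m => rfl
  have hid : ∀ m, Hupd Pk μk b i r m - Hupd P μ b i r m
      = ((Nk m - N m) + (Nk m / Sk) * (S - Sk)) / S := by
    intro m
    rw [hHk, hH]
    field_simp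
    ring
  have hbelk : IsBelief (Hupd Pk μk b i r) := Hupd_isBelief hPk hμk hb i r
  have step1 : S * l1 (Hupd Pk μk b i r) (Hupd P μ b i r)
      = ∑ m, |(Nk m - N m) + (Nk m / Sk) * (S - Sk)| := by
    unfold l1
    rw [Finset.mul_sum]
    refine Finset.sum_congr rfl fun m _ => ?_
    rw [hid m, abs_div, abs_of_pos hS]
    field_simp
  have step2 : ∑ m, |(Nk m - N m) + (Nk m / Sk) * (S - Sk)|
      ≤ (∑ m, |Nk m - N m|) + |S - Sk| := by
    have h1 : ∀ m ∈ univ, |(Nk m - N m) + (Nk m / Sk) * (S - Sk)|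
        ≤ |Nk m - N m| + (Nk m / Sk) * |S - Sk| := by
      intro m _
      refine (abs_add_le _ _).trans ?_
      have hNk0 : 0 ≤ Nk m / Sk := hbelk.1 m
      rw [abs_mul, abs_of_nonneg hNk0]
    refine (Finset.sum_le_sum h1).trans ?_
    rw [Finset.sum_add_distrib, ← Finset.sum_mul]
    have : ∑ m, Nk m / Sk = 1 := hbelk.2
    rw [this, one_mul]
  have step3 : ∑ m, |Nk m - N m|
      ≤ (∑ m, ∑ m', |Pk m m' - P m m'|) + ∑ m, |μk m i - μ m i| := by
    have h1 : ∀ m ∈ univ, |Nk m - N m| ≤ ∑ m', (|Pk m' m - P m' m|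
        + P m' m * (|μk m' i - μ m' i| * b m')) := by
      intro m _
      rw [hNk, hN, ← Finset.sum_sub_distrib]
      refine (Finset.abs_sum_le_sum_abs _ _).trans (Finset.sum_le_sum fun m' _ => ?_)
      have e : Pk m' m * (bern (μk m' i) r * b m') - P m' m * (bern (μ m' i) r * b m')
          = (Pk m' m - P m' m) * (bern (μk m' i) r * b m')
            + P m' m * ((bern (μk m' i) r - bern (μ m' i) r) * b m') := by ring
      rw [e]
      refine (abs_add_le _ _).trans ?_
      rw [abs_mul, abs_mul, abs_mul, abs_mul, abs_bern_sub,
        abs_of_nonneg (hP.1 m' m), abs_of_nonneg ((bern_pos (hμk m' i) r).le),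
        abs_of_nonneg (hb.1 m')]
      have hgb : bern (μk m' i) r * b m' ≤ 1 := by
        nlinarith [bern_pos (hμk m' i) r, bern_le_one (hμk m' i) r, hb.1 m',
          belief_le_one hb m']
      nlinarith [abs_nonneg (Pk m' m - P m' m),
        mul_nonneg (bern_pos (hμk m' i) r).le (hb.1 m')]
    refine (Finset.sum_le_sum h1).trans ?_
    have : ∀ m : Fin M, ∑ m', (|Pk m' m - P m' m| + P m' m * (|μk m' i - μ m' i| * b m'))
        = (∑ m', |Pk m' m - P m' m|) + ∑ m', P m' m * (|μk m' i - μ m' i| * b m') :=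
      fun m => Finset.sum_add_distrib
    rw [Finset.sum_congr rfl (fun m _ => this m), Finset.sum_add_distrib]
    gcongr ?_ + ?_
    · rw [Finset.sum_comm]
    · rw [Finset.sum_comm]
      refine Finset.sum_le_sum fun m' _ => ?_
      rw [← Finset.sum_mul, hP.2 m', one_mul]
      nlinarith [abs_nonneg (μk m' i - μ m' i), belief_le_one hb m', hb.1 m']
  have step4 : |S - Sk| ≤ ∑ m, |μk m i - μ m i| := by
    rw [abs_sub_comm]
    exact pObs_diff_le hb i r
  calc S * l1 (Hupd Pk μk b i r) (Hupd P μ b i r)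
      = ∑ m, |(Nk m - N m) + (Nk m / Sk) * (S - Sk)| := step1
    _ ≤ (∑ m, |Nk m - N m|) + |S - Sk| := step2
    _ ≤ ((∑ m, ∑ m', |Pk m m' - P m m'|) + ∑ m, |μk m i - μ m i|)
        + ∑ m, |μk m i - μ m i| := add_le_add step3 step4
    _ = (∑ m, ∑ m', |Pk m m' - P m m'|) + 2 * ∑ m, |μk m i - μ m i| := by ring

lemma csq {M : ℕ} (P Pk : Fin M → Fin M → ℝ) :
    (∑ m, ∑ m', |Pk m m' - P m m'|)
      ≤ (M : ℝ) * Real.sqrt (∑ m, ∑ m', (Pk m m' - P m m') ^ 2) := by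
  set F : ℝ := Real.sqrt (∑ m, ∑ m', (Pk m m' - P m m') ^ 2) with hF
  have hF0 : 0 ≤ F := Real.sqrt_nonneg _
  have hΔP0 : 0 ≤ ∑ m, ∑ m', |Pk m m' - P m m'| :=
    Finset.sum_nonneg fun m _ => Finset.sum_nonneg fun m' _ => abs_nonneg _
  have h1 : (∑ m, ∑ m', |Pk m m' - P m m'|)
      = ∑ q : Fin M × Fin M, |Pk q.1 q.2 - P q.1 q.2| := by
    rw [← Finset.sum_product']; rfl
  have h2 : (∑ m, ∑ m', (Pk m m' - P m m') ^ 2)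
      = ∑ q : Fin M × Fin M, |Pk q.1 q.2 - P q.1 q.2| ^ 2 := by
    rw [← Finset.sum_product']
    exact Finset.sum_congr rfl fun q _ => (sq_abs _).symm
  have h3 := sq_sum_le_card_mul_sum_sq (s := (univ : Finset (Fin M × Fin M)))
    (f := fun q => |Pk q.1 q.2 - P q.1 q.2|)
  rw [card_univ, Fintype.card_prod, Fintype.card_fin] at h3
  have h4 : (∑ m, ∑ m', |Pk m m' - P m m'|) ^ 2 ≤ ((M : ℝ) * F) ^ 2 := by
    rw [h1, mul_pow, hF, Real.sq_sqrt (Finset.sum_nonneg fun m _ =>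
      Finset.sum_nonneg fun m' _ => sq_nonneg _), h2]
    calc (∑ q : Fin M × Fin M, |Pk q.1 q.2 - P q.1 q.2|) ^ 2
        ≤ ((M * M : ℕ) : ℝ) * ∑ q : Fin M × Fin M, |Pk q.1 q.2 - P q.1 q.2| ^ 2 := by
          exact_mod_cast h3
      _ = (M : ℝ) ^ 2 * ∑ q : Fin M × Fin M, |Pk q.1 q.2 - P q.1 q.2| ^ 2 := by
          push_cast; ring
  exact (pow_le_pow_iff_left₀ hΔP0 (mul_nonneg (Nat.cast_nonneg _) hF0) two_ne_zero).mp h4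

lemma eps_half {M : ℕ} (hM : 2 ≤ M) {P : Fin M → Fin M → ℝ} (hP : RowStochastic P)
    {ε : ℝ} (hε : IsLeast (Set.range fun q : Fin M × Fin M => P q.1 q.2) ε)
    (hε0 : 0 < ε) : ε ≤ 1 / 2 := by
  have hεle : ∀ m m', ε ≤ P m m' := fun m m' => hε.2 ⟨(m, m'), rfl⟩
  have m0 : Fin M := ⟨0, by omega⟩
  have hMε : (M : ℝ) * ε ≤ 1 := by
    calc (M : ℝ) * ε = ∑ _m' : Fin M, ε := by
          rw [Finset.sum_const, card_univ, Fintype.card_fin, nsmul_eq_mul]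
      _ ≤ ∑ m', P m0 m' := Finset.sum_le_sum fun m' _ => hεle m0 m'
      _ = 1 := hP.2 m0
  have hM2 : (2 : ℝ) ≤ (M : ℝ) := by exact_mod_cast hM
  nlinarith

lemma L1_ge {M I : ℕ} (hM : 2 ≤ M) {μ : Fin M → Fin I → ℝ}
    (hμ : ∀ m i, μ m i ∈ Set.Ioo (0 : ℝ) 1)
    {ε : ℝ} (hε0 : 0 < ε) (hεhalf : ε ≤ 1 / 2) {μmin μmax : ℝ}
    (hμmin : IsLeast (Set.range fun q : Fin M × Fin I => μ q.1 q.2) μmin)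
    (hμmax : IsGreatest (Set.range fun q : Fin M × Fin I => μ q.1 q.2) μmax)
    {L₁ : ℝ} (hL₁ : L₁ = 4 * M * ((1 - ε) / ε) ^ 2 / min μmin (1 - μmax)) :
    4 ≤ L₁ := by
  have hμminpos : 0 < μmin := by
    obtain ⟨q, hq⟩ := hμmin.1
    rw [← hq]; exact (hμ q.1 q.2).1
  have hμmaxlt : μmax < 1 := by
    obtain ⟨q, hq⟩ := hμmax.1
    rw [← hq]; exact (hμ q.1 q.2).2
  have hminmax : μmin ≤ μmax := hμmin.2 hμmax.1
  have hc0 : 0 < min μmin (1 - μmax) := lt_min hμminpos (by linarith)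
  have hc1 : min μmin (1 - μmax) ≤ 1 := (min_le_left _ _).trans (by linarith)
  have hx1 : 1 ≤ (1 - ε) / ε := by
    rw [le_div_iff₀ hε0]; linarith
  have hM2 : (2 : ℝ) ≤ (M : ℝ) := by exact_mod_cast hM
  rw [hL₁, le_div_iff₀ hc0]
  nlinarith

lemma L2_ge {M : ℕ} (hM : 2 ≤ M) {ε : ℝ} (hε0 : 0 < ε) (hεhalf : ε ≤ 1 / 2)
    {L₂ : ℝ} (hL₂ : L₂ = 4 * M * (1 - ε) ^ 2 / ε ^ 3 + Real.sqrt M) :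
    2 * (M : ℝ) ≤ L₂ := by
  have hM2 : (2 : ℝ) ≤ (M : ℝ) := by exact_mod_cast hM
  rw [hL₂]
  have h1 : 2 * (M : ℝ) ≤ 4 * M * (1 - ε) ^ 2 / ε ^ 3 := by
    rw [le_div_iff₀ (by positivity)]
    have e3 : ε ^ 3 ≤ 1 / 8 := by
      have := pow_le_pow_left₀ hε0.le hεhalf 3
      norm_num at this
      linarith
    have e2 : (1:ℝ) / 4 ≤ (1 - ε) ^ 2 := by nlinarith
    have A : 2 * (M:ℝ) * ε ^ 3 ≤ 2 * (M:ℝ) * (1 / 8) :=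
      mul_le_mul_of_nonneg_left e3 (by linarith)
    have B : 4 * (M:ℝ) * (1 / 4) ≤ 4 * (M:ℝ) * (1 - ε) ^ 2 :=
      mul_le_mul_of_nonneg_left e2 (by linarith)
    linarith
  nlinarith [Real.sqrt_nonneg (M : ℝ)]

lemma perR {M I : ℕ} {P Pk : Fin M → Fin M → ℝ} (hP : RowStochastic P)
    (hPk : RowStochastic Pk) {μ μk : Fin M → Fin I → ℝ}
    (hμ : ∀ m i, μ m i ∈ Set.Ioo (0:ℝ) 1) (hμk : ∀ m i, μk m i ∈ Set.Ioo (0:ℝ) 1)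
    {D : ℝ} (hD : 0 < D) {v : (Fin M → ℝ) → ℝ}
    (hvbdd : ∀ b, IsBelief b → |v b| ≤ D / 2)
    (hvLip : ∀ b b', IsBelief b → IsBelief b' → |v b - v b'| ≤ D / 2 * l1 b b')
    {b : Fin M → ℝ} (hb : IsBelief b) (i : Fin I) (r : Bool) :
    |v (Hupd Pk μk b i r) * pObs μk b i r - v (Hupd P μ b i r) * pObs μ b i r|
      ≤ D/2 * (∑ m, |μk m i - μ m i|)
        + D/2 * ((∑ m, ∑ m', |Pk m m' - P m m'|) + 2 * ∑ m, |μk m i - μ m i|) := by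
  have hSpos : 0 < pObs μ b i r := pObs_pos hμ hb i r
  have hbelk : IsBelief (Hupd Pk μk b i r) := Hupd_isBelief hPk hμk hb i r
  have hbel : IsBelief (Hupd P μ b i r) := Hupd_isBelief hP hμ hb i r
  have e : v (Hupd Pk μk b i r) * pObs μk b i r - v (Hupd P μ b i r) * pObs μ b i r
      = v (Hupd Pk μk b i r) * (pObs μk b i r - pObs μ b i r)
        + (v (Hupd Pk μk b i r) - v (Hupd P μ b i r)) * pObs μ b i r := by ring
  rw [e]
  have t1 : |v (Hupd Pk μk b i r) * (pObs μk b i r - pObs μ b i r)|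
      ≤ D/2 * (∑ m, |μk m i - μ m i|) := by
    rw [abs_mul]
    exact mul_le_mul (hvbdd _ hbelk) (pObs_diff_le hb i r) (abs_nonneg _) (by linarith)
  have t2 : |(v (Hupd Pk μk b i r) - v (Hupd P μ b i r)) * pObs μ b i r|
      ≤ D/2 * ((∑ m, ∑ m', |Pk m m' - P m m'|) + 2 * ∑ m, |μk m i - μ m i|) := by
    rw [abs_mul, abs_of_pos hSpos]
    calc |v (Hupd Pk μk b i r) - v (Hupd P μ b i r)| * pObs μ b i r
        ≤ (D/2 * l1 (Hupd Pk μk b i r) (Hupd P μ b i r)) * pObs μ b i r :=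
          mul_le_mul_of_nonneg_right (hvLip _ _ hbelk hbel) hSpos.le
      _ = D/2 * (pObs μ b i r * l1 (Hupd Pk μk b i r) (Hupd P μ b i r)) := by ring
      _ ≤ D/2 * ((∑ m, ∑ m', |Pk m m' - P m m'|) + 2 * ∑ m, |μk m i - μ m i|) :=
          mul_le_mul_of_nonneg_left (keyB hP hPk hμ hμk hb i r) (by linarith)
  exact (abs_add_le _ _).trans (add_le_add t1 t2)

/-- one-step difference, under two models, of the expected value of
a bounded Lipschitz function of the updated belief. -/
theorem one_step_value_difference {M I : ℕ} (hM : 2 ≤ M) (hI : 0 < I)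
    (P Pk : Fin M → Fin M → ℝ) (hP : RowStochastic P) (hPk : RowStochastic Pk)
    (μ μk : Fin M → Fin I → ℝ)
    (hμ : ∀ m i, μ m i ∈ Set.Ioo (0 : ℝ) 1)
    (hμk : ∀ m i, μk m i ∈ Set.Ioo (0 : ℝ) 1)
    (ε : ℝ) (hε : IsLeast (Set.range fun q : Fin M × Fin M => P q.1 q.2) ε)
    (hε0 : 0 < ε)
    (μmin μmax : ℝ)
    (hμmin : IsLeast (Set.range fun q : Fin M × Fin I => μ q.1 q.2) μmin)
    (hμmax : IsGreatest (Set.range fun q : Fin M × Fin I => μ q.1 q.2) μmax)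
    (D L₁ L₂ : ℝ) (hD : 0 < D)
    (hL₁ : L₁ = 4 * M * ((1 - ε) / ε) ^ 2 / min μmin (1 - μmax))
    (hL₂ : L₂ = 4 * M * (1 - ε) ^ 2 / ε ^ 3 + Real.sqrt M)
    (v : (Fin M → ℝ) → ℝ)
    (hvbdd : ∀ b, IsBelief b → |v b| ≤ D / 2)
    (hvLip : ∀ b b', IsBelief b → IsBelief b' → |v b - v b'| ≤ D / 2 * l1 b b')
    (b : Fin M → ℝ) (hb : IsBelief b) (i : Fin I) :
    |(∑ r : Bool, v (Hupd Pk μk b i r) * pObs μk b i r) -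
        ∑ r : Bool, v (Hupd P μ b i r) * pObs μ b i r| ≤
      D * (∑ m, |μk m i - μ m i|) +
        D / 2 * (L₁ * (Finset.univ.sup' ⟨⟨0, hI⟩, Finset.mem_univ _⟩ fun j =>
              ∑ m, |μk m j - μ m j|) +
          L₂ * Real.sqrt (∑ m, ∑ m', (Pk m m' - P m m') ^ 2)) := by
  set Δμ : ℝ := ∑ m, |μk m i - μ m i| with hΔμ
  set ΔP : ℝ := ∑ m, ∑ m', |Pk m m' - P m m'| with hΔP
  set F : ℝ := Real.sqrt (∑ m, ∑ m', (Pk m m' - P m m') ^ 2) with hF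
  set sup : ℝ := Finset.univ.sup' ⟨⟨0, hI⟩, Finset.mem_univ _⟩
    (fun j => ∑ m, |μk m j - μ m j|) with hsup
  have hΔμ0 : 0 ≤ Δμ := Finset.sum_nonneg fun m _ => abs_nonneg _
  have hF0 : 0 ≤ F := Real.sqrt_nonneg _
  have hΔμsup : Δμ ≤ sup := by
    rw [hΔμ, hsup]
    exact Finset.le_sup' (fun j => ∑ m, |μk m j - μ m j|) (Finset.mem_univ i)
  have hsup0 : 0 ≤ sup := hΔμ0.trans hΔμsup
  have hεhalf : ε ≤ 1 / 2 := eps_half hM hP hε hε0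
  have hL₁4 : 4 ≤ L₁ := L1_ge hM hμ hε0 hεhalf hμmin hμmax hL₁
  have hL₂2M : 2 * (M : ℝ) ≤ L₂ := L2_ge hM hε0 hεhalf hL₂
  have hCS : ΔP ≤ (M : ℝ) * F := csq P Pk
  have h1 := perR hP hPk hμ hμk hD hvbdd hvLip hb i true
  have h2 := perR hP hPk hμ hμk hD hvbdd hvLip hb i false
  rw [← hΔμ, ← hΔP] at h1 h2
  rw [Fintype.sum_bool, Fintype.sum_bool]
  have e : v (Hupd Pk μk b i true) * pObs μk b i true
        + v (Hupd Pk μk b i false) * pObs μk b i false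
      - (v (Hupd P μ b i true) * pObs μ b i true
        + v (Hupd P μ b i false) * pObs μ b i false)
      = (v (Hupd Pk μk b i true) * pObs μk b i true
          - v (Hupd P μ b i true) * pObs μ b i true)
        + (v (Hupd Pk μk b i false) * pObs μk b i false
          - v (Hupd P μ b i false) * pObs μ b i false) := by ring
  rw [e]
  refine (abs_add_le _ _).trans ?_
  clear_value Δμ ΔP F sup
  have hfinal : 2*ΔP + 4*Δμ ≤ L₁ * sup + L₂ * F := by
    have ha : 4*Δμ ≤ L₁ * sup :=
      le_trans (by linarith) (mul_le_mul_of_nonneg_right hL₁4 hsup0)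
    have hb' : 2*ΔP ≤ L₂ * F := by
      have : 2*ΔP ≤ (2*(M:ℝ)) * F := by nlinarith [hCS]
      exact this.trans (mul_le_mul_of_nonneg_right hL₂2M hF0)
    linarith
  have hlast : D/2 * (2*ΔP + 4*Δμ) ≤ D/2 * (L₁ * sup + L₂ * F) :=
    mul_le_mul_of_nonneg_left hfinal (by linarith)
  linarith
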